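/- arXiv:1809.01615 — 3 statements merged into one kernel-verified Lean document; each statement's English description precedes it below -/
import Mathlib

section
/- For all natural numbers N, n1, n2, the sum over all subsets K of {1,…,N} of ((|K|+n1)!/n1!)·((N−|K|+n2)!/n2!) equals (N+n1+n2+1)!/(n1+n2+1)!, where |K| denotes the cardinality of K. -/
/-!
With the rising factorial `x⁽ᵏ⁾ = x (x+1) ⋯ (x+k-1)`, the summand is `(n₁+1)⁽|K|⁾ (n₂+1)⁽ᴺ⁻|K|⁾` and
the right-hand side is `(n₁+n₂+2)⁽ᴺ⁾`, so this is the binomial theorem for rising factorials,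
`(x+y)⁽ᴺ⁾ = ∑_{K ⊆ [N]} x⁽|K|⁾ y⁽ᴺ⁻|K|⁾`. It holds in any commutative semiring, by induction on the
ground set: splitting the subsets by whether they contain a new element and peeling off the first
factor with `z⁽ᵏ⁺¹⁾ = z (z+1)⁽ᵏ⁾` reduces the two halves to the identities for `(x, y+1)` and
`(x+1, y)`, which add up to `y (x+y+1)⁽ᴺ⁾ + x (x+y+1)⁽ᴺ⁾ = (x+y)⁽ᴺ⁺¹⁾`.
-/

open Finset Polynomial

theorem ascPochhammer_succ_eval_left {S : Type*} [CommSemiring S] (n : ℕ) (x : S) :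
    (ascPochhammer S (n + 1)).eval x = x * (ascPochhammer S n).eval (x + 1) := by
  rw [ascPochhammer_succ_left, eval_mul, eval_X, eval_comp, eval_add, eval_X, eval_one]

theorem ascPochhammer_eval_add_eq_sum_powerset {R α : Type*} [CommSemiring R] (s : Finset α)
    (x y : R) :
    (ascPochhammer R #s).eval (x + y) =
      ∑ t ∈ s.powerset, (ascPochhammer R #t).eval x * (ascPochhammer R (#s - #t)).eval y := by
  classical
  induction s using Finset.induction_on generalizing x y with
  | empty => simp
  | insert a s ha ih =>
    have without_a : ∑ t ∈ s.powerset,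
        (ascPochhammer R #t).eval x * (ascPochhammer R (#(insert a s) - #t)).eval y =
          y * (ascPochhammer R #s).eval (x + y + 1) := by
      rw [add_assoc, ih, mul_sum]
      refine sum_congr rfl fun t ht => ?_
      have hts : #t ≤ #s := card_le_card (mem_powerset.mp ht)
      rw [card_insert_of_notMem ha, Nat.sub_add_comm hts, ascPochhammer_succ_eval_left]
      ring
    have with_a : ∑ t ∈ s.powerset,
        (ascPochhammer R #(insert a t)).eval x *
          (ascPochhammer R (#(insert a s) - #(insert a t))).eval y =
          x * (ascPochhammer R #s).eval (x + y + 1) := by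
      rw [add_right_comm, ih, mul_sum]
      refine sum_congr rfl fun t ht => ?_
      have hat : a ∉ t := fun h => ha (mem_powerset.mp ht h)
      rw [card_insert_of_notMem ha, card_insert_of_notMem hat, Nat.add_sub_add_right,
        ascPochhammer_succ_eval_left]
      ring
    rw [sum_powerset_insert ha, without_a, with_a, card_insert_of_notMem ha,
      ascPochhammer_succ_eval_left]
    ring

/-- Lemma 2 of the paper: sum over subsets `K` of `{1,…,N}` of
`((|K|+n₁)!/n₁!)·((N−|K|+n₂)!/n₂!)` equals `(N+n₁+n₂+1)!/(n₁+n₂+1)!`.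
The divisions are exact divisions of natural numbers. -/
theorem sum_powerset_factorial_ratio (N n1 n2 : ℕ) :
    ∑ K ∈ (Finset.Icc 1 N).powerset,
      ((K.card + n1).factorial / n1.factorial) *
        ((N - K.card + n2).factorial / n2.factorial)
      = (N + n1 + n2 + 1).factorial / (n1 + n2 + 1).factorial := by
  have h := ascPochhammer_eval_add_eq_sum_powerset (Icc 1 N) (n1 + 1) (n2 + 1)
  simp only [ascPochhammer_nat_eq_ascFactorial, Nat.card_Icc, Nat.add_sub_cancel,
    Nat.ascFactorial_eq_div] at h
  rw [show n1 + 1 + (n2 + 1) = n1 + n2 + 1 + 1 by ring, Nat.ascFactorial_eq_div] at h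
  rw [show N + n1 + n2 + 1 = n1 + n2 + 1 + N by ring, h]
  simp_rw [add_comm _ n1, add_comm _ n2]
end

section
/- For every natural number m and every real number x with 0 ≤ x ≤ 1/4, the series Σ_{n≥0} B_{n,m} x^n converges and its sum equals ((1−√(1−4x))/2)^m. -/
/-!
The series `C(x) = ∑_{n ≥ 1} A_{n-1} xⁿ` satisfies `C = x + C²` by the Catalan recurrence,
and on `[0, 1/4]` it converges with `C(x) ≤ 1/2`, because its partial sums at `x = 1/4` are
`(1 - binom(2N, N) / 4ᴺ) / 2`. Hence `C(x)` is the smaller root `(1 - √(1 - 4x)) / 2`.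
The `m`-th power of a convergent series of nonnegative terms is the sum over `m`-tuples of
indices of the products of the terms; grouping the tuples by their total `n` gives
`∑ₙ B_{n,m} xⁿ`.
-/

open Finset

/-- `B n m` from Lemma 3 of the paper: for `n ≥ m ≥ 1` it is the sum over all
`m`-tuples `(n₁,…,n_m)` of positive integers with `n₁+⋯+n_m = n` of
`A_{n₁−1}⋯A_{n_m−1}` (where `A_k = catalan k`); `B 0 0 = 1`; and it is `0`
otherwise.  (The sum over positive `m`-tuples summing to `n` is empty in all
the "otherwise" cases, and for `n = m = 0` the unique empty tuple contributes
the empty product `1`.) -/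
def B (n m : ℕ) : ℕ :=
  ∑ f ∈ Finset.Nat.antidiagonalTuple m n,
    if ∀ i, f i ≠ 0 then ∏ i, catalan (f i - 1) else 0

theorem centralBinom_succ_add_two_mul_catalan (n : ℕ) :
    Nat.centralBinom (n + 1) + 2 * catalan n = 4 * Nat.centralBinom n := by
  apply Nat.eq_of_mul_eq_mul_left n.succ_pos
  calc (n + 1) * (Nat.centralBinom (n + 1) + 2 * catalan n)
      = (n + 1) * Nat.centralBinom (n + 1) + 2 * ((n + 1) * catalan n) := by ring
    _ = 2 * (2 * n + 1) * Nat.centralBinom n + 2 * Nat.centralBinom n := by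
      rw [Nat.succ_mul_centralBinom_succ, succ_mul_catalan_eq_centralBinom]
    _ = (n + 1) * (4 * Nat.centralBinom n) := by ring

theorem sum_range_catalan_mul_quarter_pow (N : ℕ) :
    ∑ n ∈ range N, (catalan n : ℝ) * (1 / 4) ^ (n + 1)
      = (1 - Nat.centralBinom N / 4 ^ N) / 2 := by
  induction N with
  | zero => simp
  | succ N ih =>
    have h : (Nat.centralBinom (N + 1) : ℝ) + 2 * catalan N = 4 * Nat.centralBinom N := by
      exact_mod_cast centralBinom_succ_add_two_mul_catalan N
    rw [sum_range_succ, ih, one_div_pow, pow_succ]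
    field_simp
    linear_combination h

theorem sum_range_catalan_mul_pow_le {x : ℝ} (hx0 : 0 ≤ x) (hx1 : x ≤ 1 / 4) (N : ℕ) :
    ∑ n ∈ range N, (catalan n : ℝ) * x ^ (n + 1) ≤ 1 / 2 :=
  calc ∑ n ∈ range N, (catalan n : ℝ) * x ^ (n + 1)
      ≤ ∑ n ∈ range N, (catalan n : ℝ) * (1 / 4) ^ (n + 1) := by gcongr
    _ = (1 - Nat.centralBinom N / 4 ^ N) / 2 := sum_range_catalan_mul_quarter_pow N
    _ ≤ 1 / 2 := by gcongr; simp only [sub_le_self_iff]; positivity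

theorem sum_antidiagonal_catalan_mul_pow (x : ℝ) (n : ℕ) :
    ∑ kl ∈ antidiagonal n, (catalan kl.1 * x ^ (kl.1 + 1)) * (catalan kl.2 * x ^ (kl.2 + 1))
      = (catalan (n + 1) : ℝ) * x ^ (n + 2) := by
  rw [catalan_succ', Nat.cast_sum, sum_mul]
  refine sum_congr rfl fun kl hkl => ?_
  rw [HasAntidiagonal.mem_antidiagonal] at hkl
  rw [Nat.cast_mul, ← hkl]
  ring

theorem hasSum_catalan_mul_pow_succ {x : ℝ} (hx0 : 0 ≤ x) (hx1 : x ≤ 1 / 4) :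
    HasSum (fun n => (catalan n : ℝ) * x ^ (n + 1)) ((1 - √(1 - 4 * x)) / 2) := by
  set c : ℕ → ℝ := fun n => catalan n * x ^ (n + 1)
  have hc : ∀ n, 0 ≤ c n := fun n => by positivity
  have hsum : Summable c := summable_of_sum_range_le hc (sum_range_catalan_mul_pow_le hx0 hx1)
  set y := ∑' n, c n
  have hy : y ≤ 1 / 2 :=
    Real.tsum_le_of_sum_range_le hc (sum_range_catalan_mul_pow_le hx0 hx1)
  have hsq : y * y = ∑' n, c (n + 1) := by
    rw [hsum.tsum_mul_tsum_eq_tsum_sum_antidiagonal hsum (hsum.mul_of_nonneg hsum hc hc)]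
    exact tsum_congr (sum_antidiagonal_catalan_mul_pow x)
  have hquad : y = x + y * y := by
    rw [hsq]
    simpa [c] using hsum.tsum_eq_zero_add
  have hroot : √(1 - 4 * x) = 1 - 2 * y := by
    rw [show 1 - 4 * x = (1 - 2 * y) ^ 2 by linear_combination 4 * hquad,
      Real.sqrt_sq (by linarith)]
  rw [hroot, show (1 - (1 - 2 * y)) / 2 = y by ring]
  exact hsum.hasSum

def catalanShift : ℕ → ℕ
  | 0 => 0
  | n + 1 => catalan n

theorem hasSum_catalanShift_mul_pow {x : ℝ} (hx0 : 0 ≤ x) (hx1 : x ≤ 1 / 4) :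
    HasSum (fun n => (catalanShift n : ℝ) * x ^ n) ((1 - √(1 - 4 * x)) / 2) := by
  have h := HasSum.zero_add (f := fun n => (catalanShift n : ℝ) * x ^ n)
    (hasSum_catalan_mul_pow_succ hx0 hx1)
  rwa [catalanShift, Nat.cast_zero, zero_mul, zero_add] at h

theorem B_eq_sum_prod_catalanShift (n m : ℕ) :
    B n m = ∑ f ∈ Nat.antidiagonalTuple m n, ∏ i, catalanShift (f i) := by
  refine sum_congr rfl fun f _ => ?_
  have hshift : ∀ k, catalanShift k = if k ≠ 0 then catalan (k - 1) else 0 := by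
    rintro (_ | k) <;> simp [catalanShift]
  simp only [hshift, prod_ite_zero, mem_univ, true_implies]

theorem hasSum_prod_pi_of_nonneg {ι : Type*} {f : ι → ℝ} {s : ℝ} (hf : 0 ≤ f) (hs : HasSum f s)
    (k : ℕ) :
    HasSum (fun g : Fin k → ι => ∏ i, f (g i)) (s ^ k) := by
  induction k with
  | zero => simp [hasSum_unique]
  | succ k ih =>
    set F := fun g : Fin k → ι => ∏ i, f (g i)
    have hF : 0 ≤ F := fun g => prod_nonneg fun i _ => hf _
    have hcons : (fun g : Fin (k + 1) → ι => ∏ i, f (g i)) ∘ Fin.consEquiv (fun _ => ι)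
        = fun p => f p.1 * F p.2 := by
      ext p
      simp [F, Fin.prod_univ_succ]
    rw [← (Fin.consEquiv fun _ => ι).hasSum_iff, hcons, pow_succ']
    exact hs.mul ih (hs.summable.mul_of_nonneg ih.summable hf hF)

theorem hasSum_sum_antidiagonalTuple_prod_of_nonneg {f : ℕ → ℝ} {s : ℝ} (hf : 0 ≤ f)
    (hs : HasSum f s) (k : ℕ) :
    HasSum (fun n => ∑ g ∈ Nat.antidiagonalTuple k n, ∏ i, f (g i)) (s ^ k) := by
  have htuples := (Nat.sigmaAntidiagonalTupleEquivTuple k).hasSum_iff.mpr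
    (hasSum_prod_pi_of_nonneg hf hs k)
  refine htuples.sigma fun n => ?_
  rw [← sum_coe_sort]
  exact hasSum_fintype _

/-- Second part of Lemma 3 of the paper: for `0 ≤ x ≤ 1/4` the series
`Σ_{n≥0} B_{n,m} xⁿ` converges with sum `((1−√(1−4x))/2)^m`. -/
theorem hasSum_B_mul_pow (m : ℕ) (x : ℝ) (hx0 : 0 ≤ x) (hx1 : x ≤ 1 / 4) :
    HasSum (fun n : ℕ => (B n m : ℝ) * x ^ n)
      (((1 - Real.sqrt (1 - 4 * x)) / 2) ^ m) := by
  have hnonneg : 0 ≤ fun n => (catalanShift n : ℝ) * x ^ n := fun n => by positivity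
  convert hasSum_sum_antidiagonalTuple_prod_of_nonneg hnonneg
    (hasSum_catalanShift_mul_pow hx0 hx1) m using 2 with n
  rw [B_eq_sum_prod_catalanShift, Nat.cast_sum, sum_mul]
  refine sum_congr rfl fun g hg => ?_
  rw [Nat.mem_antidiagonalTuple] at hg
  rw [prod_mul_distrib, prod_pow_eq_pow_sum, hg, Nat.cast_prod]
end

section
/- For all integers n ≥ 1 and m ≥ 1, one has n·B_{n,m} = Σ_{h=0}^{n−1} A_h·( m·B_{n−h−1,m−1} + (2n−2h−m−2)·B_{n−h−1,m} ), as an identity of integers. -/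
/-!
Let `A(X) = ∑ Aₙ Xⁿ` be the Catalan series; then `B_{n,m}` is the coefficient of `Xⁿ` in `F ^ m`,
where `F = X A`. The functional equation `A = 1 + X A²` gives `F = X + F²`, hence `F' (1 - 2F) = 1`,
and therefore `(F ^ m)' = A (m F ^ (m - 1) + (2 X D - m) F ^ m)`, where `D` is the derivative.
Comparing the coefficients of `X^(n-1)` on both sides is the recursion.
-/

open Finset

namespace PowerSeries

theorem coeff_pow_eq_sum_antidiagonalTuple {R : Type*} [CommSemiring R] (φ : R⟦X⟧) (m n : ℕ) :
    coeff n (φ ^ m) = ∑ f ∈ Nat.antidiagonalTuple m n, ∏ i, coeff (f i) φ := by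
  have h := coeff_prod (fun _ : Fin m => φ) n univ
  rw [prod_const, card_univ, Fintype.card_fin] at h
  rw [h, finsuppAntidiag, sum_map, ← piAntidiag_univ_fin_eq_antidiagonalTuple]
  exact sum_attach (piAntidiag univ n) fun f => ∏ i, coeff (f i) φ

theorem coeff_X_mul_derivative {R : Type*} [CommSemiring R] (f : R⟦X⟧) (k : ℕ) :
    coeff k (X * d⁄dX R f) = k * coeff k f := by
  cases k with
  | zero => simp
  | succ k => rw [coeff_succ_X_mul, coeff_derivative, mul_comm]; push_cast; rfl

section CatalanEquation

variable {R : Type*} [CommRing R] {A : R⟦X⟧}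

theorem derivative_X_mul_pow_succ (hA : A ^ 2 * X + 1 = A) (m : ℕ) :
    d⁄dX R ((X * A) ^ (m + 1)) =
      A * (((m : R⟦X⟧) + 1) * (X * A) ^ m
        + (2 * X * d⁄dX R ((X * A) ^ (m + 1)) - ((m : R⟦X⟧) + 1) * (X * A) ^ (m + 1))) := by
  have hF : X * A = X + (X * A) ^ 2 := by linear_combination -X * hA
  have hF' : d⁄dX R (X * A) = 1 + 2 * (X * A) * d⁄dX R (X * A) := by
    have := congrArg (d⁄dX R) hF
    rw [map_add, derivative_X, derivative_pow] at this
    linear_combination this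
  rw [derivative_pow]
  push_cast
  linear_combination (((m : R⟦X⟧) + 1) * (X * A) ^ m) * (hF' + hA)

theorem succ_mul_coeff_succ_X_mul_pow_succ (hA : A ^ 2 * X + 1 = A) (m N : ℕ) :
    ((N : R) + 1) * coeff (N + 1) ((X * A) ^ (m + 1)) =
      ∑ h ∈ range (N + 1), coeff h A *
        (((m : R) + 1) * coeff (N - h) ((X * A) ^ m)
          + (2 * ((N - h : ℕ) : R) - m - 1) * coeff (N - h) ((X * A) ^ (m + 1))) := by
  rw [mul_comm, ← coeff_derivative, derivative_X_mul_pow_succ hA, coeff_mul,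
    Nat.sum_antidiagonal_eq_sum_range_succ_mk]
  refine sum_congr rfl fun h _ => ?_
  have hcast : ((m : R⟦X⟧) + 1) = C ((m : R) + 1) := by simp
  rw [hcast, mul_assoc 2, show (2 : R⟦X⟧) = C 2 from (map_ofNat C 2).symm, map_add, map_sub, coeff_C_mul, coeff_C_mul, coeff_C_mul, coeff_X_mul_derivative]
  ring

end CatalanEquation
end PowerSeries

open PowerSeries

theorem coeff_X_mul_catalanSeries (k : ℕ) :
    coeff k (X * catalanSeries) = if k = 0 then 0 else catalan (k - 1) := by
  cases k with
  | zero => simp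
  | succ k => simp [coeff_succ_X_mul]

theorem coeff_X_mul_catalanSeries_pow (n m : ℕ) :
    coeff n ((X * catalanSeries) ^ m) = B n m := by
  rw [coeff_pow_eq_sum_antidiagonalTuple, B]
  refine sum_congr rfl fun f _ => ?_
  split_ifs with hf
  · exact prod_congr rfl fun i _ => by rw [coeff_X_mul_catalanSeries, if_neg (hf i)]
  · push Not at hf
    obtain ⟨i, hi⟩ := hf
    exact prod_eq_zero (mem_univ i) (by rw [coeff_X_mul_catalanSeries, if_pos hi])

theorem catalanSeries_map_int_sq_mul_X_add_one :
    (catalanSeries.map (Nat.castRingHom ℤ)) ^ 2 * X + 1 =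
      catalanSeries.map (Nat.castRingHom ℤ) := by
  simpa using congrArg (map (Nat.castRingHom ℤ)) catalanSeries_sq_mul_X_add_one

theorem coeff_X_mul_catalanSeries_map_int_pow (n m : ℕ) :
    coeff n ((X * catalanSeries.map (Nat.castRingHom ℤ)) ^ m) = (B n m : ℤ) := by
  rw [← map_X (Nat.castRingHom ℤ), ← map_mul, ← map_pow, coeff_map, coeff_X_mul_catalanSeries_pow,
    eq_natCast]

/-- Third part of Lemma 3 of the paper, as an identity of integers: for `n, m ≥ 1`,
`n·B_{n,m} = Σ_{h=0}^{n−1} A_h·(m·B_{n−h−1,m−1} + (2n−2h−m−2)·B_{n−h−1,m})`. -/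
theorem B_recursion (n m : ℕ) (hn : 1 ≤ n) (hm : 1 ≤ m) :
    (n : ℤ) * (B n m : ℤ)
      = ∑ h ∈ Finset.range n,
          (catalan h : ℤ) *
            ((m : ℤ) * (B (n - h - 1) (m - 1) : ℤ)
              + (2 * (n : ℤ) - 2 * (h : ℤ) - (m : ℤ) - 2) * (B (n - h - 1) m : ℤ)) := by
  obtain ⟨N, rfl⟩ := Nat.exists_eq_add_of_le' hn
  obtain ⟨M, rfl⟩ := Nat.exists_eq_add_of_le' hm
  have key := succ_mul_coeff_succ_X_mul_pow_succ catalanSeries_map_int_sq_mul_X_add_one M N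
  simp only [coeff_X_mul_catalanSeries_map_int_pow, coeff_map, catalanSeries_coeff, eq_natCast] at key
  push_cast
  rw [key]
  refine sum_congr rfl fun h hh => ?_
  have hhN : h ≤ N := Nat.lt_succ_iff.mp (mem_range.mp hh)
  rw [show N + 1 - h - 1 = N - h by omega, Nat.cast_sub hhN]
  ring
end
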